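/- arXiv:1904.12063 — 5 statements merged into one kernel-verified Lean document; each statement's English description precedes it below -/
import Mathlib

section
/- Let V be a real inner product space, let 𝓀 and 𝓅 be linear subspaces of V that are mutually orthogonal (i.e., ⟨A, P⟩ = 0 for every A ∈ 𝓀 and P ∈ 𝓅), and let φ : V → V be a linear isometry. If P, Q ∈ 𝓅 and A ∈ 𝓀 satisfy P − Q = A − φ(A), then P = Q. -/
open scoped RealInnerProductSpace

/- `P - Q = A - φ A` lies in `𝓅`, hence is orthogonal to `A`. But for vectors of equal norm,
`‖A - φ A‖² = 2 ⟪A, A - φ A⟫`, so `A - φ A = 0`. -/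

theorem norm_sub_sq_eq_two_mul_inner_of_norm_eq {V : Type*} [NormedAddCommGroup V]
    [InnerProductSpace ℝ V] {v w : V} (h : ‖w‖ = ‖v‖) :
    ‖v - w‖ ^ 2 = 2 * ⟪v, v - w⟫ := by
  rw [norm_sub_sq_real, h, inner_sub_right, real_inner_self_eq_norm_sq]
  ring

theorem eq_of_norm_eq_of_inner_sub_eq_zero {V : Type*} [NormedAddCommGroup V]
    [InnerProductSpace ℝ V] {v w : V} (h : ‖w‖ = ‖v‖) (horth : ⟪v, v - w⟫ = 0) : v = w := by
  have hsq : ‖v - w‖ ^ 2 = 0 := by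
    rw [norm_sub_sq_eq_two_mul_inner_of_norm_eq h, horth, mul_zero]
  exact sub_eq_zero.mp (norm_eq_zero.mp (pow_eq_zero_iff two_ne_zero |>.mp hsq))

/-- **Uniqueness of horizontal lifts (algebraic core).**
If `𝓀` and `𝓅` are mutually orthogonal subspaces of a real inner product space `V`,
`φ : V → V` is a linear isometry, `P, Q ∈ 𝓅`, `A ∈ 𝓀` and `P - Q = A - φ A`,
then `P = Q`. -/
theorem stmt0 {V : Type*} [NormedAddCommGroup V] [InnerProductSpace ℝ V]
    (𝓀 𝓅 : Submodule ℝ V)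
    (hortho : ∀ A ∈ 𝓀, ∀ P ∈ 𝓅, ⟪A, P⟫ = 0)
    (φ : V →ₗ[ℝ] V)
    (hiso : ∀ u v : V, ⟪φ u, φ v⟫ = ⟪u, v⟫)
    (P Q A : V) (hP : P ∈ 𝓅) (hQ : Q ∈ 𝓅) (hA : A ∈ 𝓀)
    (heq : P - Q = A - φ A) : P = Q := by
  have hnorm : ‖φ A‖ = ‖A‖ := by
    rw [norm_eq_sqrt_real_inner, hiso, ← norm_eq_sqrt_real_inner]
  have horth : ⟪A, A - φ A⟫ = 0 := heq ▸ hortho A hA _ (𝓅.sub_mem hP hQ)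
  have hfix : A = φ A := eq_of_norm_eq_of_inner_sub_eq_zero hnorm horth
  rw [← sub_eq_zero, heq, ← hfix, sub_self]
end

section
/- Fix integers n and q with 1 ≤ q < n. Let 𝓀 be the set of n×n complex matrices A that are skew-Hermitian (Aᴴ = −A), traceless, and block-diagonal with respect to the partition (q, n−q) of the index set (i.e., A i j = 0 whenever exactly one of i, j has index < q), and let 𝓅 be the set of n×n complex skew-Hermitian matrices P that are block-antidiagonal with respect to this partition (i.e., P i j = 0 whenever both indices are < q or both are ≥ q). Then for every x in the special unitary group SU(n), if P, Q ∈ 𝓅 and A ∈ 𝓀 satisfy P − Q = A − x A x⁻¹, then P = Q. -/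
open Matrix

private lemma trace_zero_of_blocks (n q : ℕ) (A M : Matrix (Fin n) (Fin n) ℂ)
    (hA3 : ∀ i j : Fin n, ((i.val < q ∧ ¬ j.val < q) ∨ (¬ i.val < q ∧ j.val < q)) → A i j = 0)
    (hM : ∀ i j : Fin n, ((i.val < q ∧ j.val < q) ∨ (¬ i.val < q ∧ ¬ j.val < q)) → M i j = 0) :
    (Aᴴ * M).trace = 0 ∧ (Mᴴ * A).trace = 0 := by
  constructor <;>
  · simp only [Matrix.trace, Matrix.diag, Matrix.mul_apply, Matrix.conjTranspose_apply]
    apply Finset.sum_eq_zero; intro i _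
    apply Finset.sum_eq_zero; intro j _
    by_cases h1 : (j : ℕ) < q <;> by_cases h2 : (i : ℕ) < q
    · rw [hM j i (Or.inl ⟨h1, h2⟩)]; simp
    · rw [hA3 j i (Or.inl ⟨h1, h2⟩)]; simp
    · rw [hA3 j i (Or.inr ⟨h1, h2⟩)]; simp
    · rw [hM j i (Or.inr ⟨h1, h2⟩)]; simp

private lemma eq_zero_of_trace (n : ℕ) (M : Matrix (Fin n) (Fin n) ℂ)
    (h : (Mᴴ * M).trace = 0) : M = 0 := by
  have h1 : (Mᴴ * M).trace = ((∑ i, ∑ j, Complex.normSq (M j i) : ℝ) : ℂ) := by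
    simp [Matrix.trace, Matrix.mul_apply, Matrix.diag, Complex.normSq_eq_conj_mul_self]
  rw [h1] at h
  have h2 : (∑ i, ∑ j, Complex.normSq (M j i) : ℝ) = 0 := by exact_mod_cast h
  ext i j
  have := (Finset.sum_eq_zero_iff_of_nonneg (fun i _ => Finset.sum_nonneg
    (fun j _ => Complex.normSq_nonneg _))).mp h2 j (Finset.mem_univ _)
  have := (Finset.sum_eq_zero_iff_of_nonneg (fun j _ => Complex.normSq_nonneg _)).mp
    this i (Finset.mem_univ _)
  simpa using Complex.normSq_eq_zero.mp this

/-- **Uniqueness of lifts for the type AIII Cartan decomposition of `su(n)`.**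
Let `𝓀` be the block-diagonal traceless skew-Hermitian matrices and `𝓅` the
block-antidiagonal skew-Hermitian matrices (blocks of sizes `q` and `n - q`).
For every `x ∈ SU(n)`, if `P, Q ∈ 𝓅` and `A ∈ 𝓀` satisfy
`P - Q = A - x * A * x⁻¹`, then `P = Q`. -/
theorem stmt1 (n q : ℕ) (hq : 1 ≤ q) (hqn : q < n)
    (x : Matrix (Fin n) (Fin n) ℂ)
    (hx : x ∈ Matrix.specialUnitaryGroup (Fin n) ℂ)
    (P Q A : Matrix (Fin n) (Fin n) ℂ)
    -- `P ∈ 𝓅`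
    (hP1 : Pᴴ = -P)
    (hP2 : ∀ i j : Fin n, ((i.val < q ∧ j.val < q) ∨ (¬ i.val < q ∧ ¬ j.val < q)) → P i j = 0)
    -- `Q ∈ 𝓅`
    (hQ1 : Qᴴ = -Q)
    (hQ2 : ∀ i j : Fin n, ((i.val < q ∧ j.val < q) ∨ (¬ i.val < q ∧ ¬ j.val < q)) → Q i j = 0)
    -- `A ∈ 𝓀`
    (hA1 : Aᴴ = -A)
    (hA2 : A.trace = 0)
    (hA3 : ∀ i j : Fin n, ((i.val < q ∧ ¬ j.val < q) ∨ (¬ i.val < q ∧ j.val < q)) → A i j = 0)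
    (heq : P - Q = A - x * A * x⁻¹) : P = Q := by
  set M := P - Q with hMdef
  have hxu : x ∈ Matrix.unitaryGroup (Fin n) ℂ := ((Matrix.mem_specialUnitaryGroup_iff).mp hx).1
  have hxr : x * xᴴ = 1 := (Matrix.mem_unitaryGroup_iff).mp hxu
  have hxl : xᴴ * x = 1 := (Matrix.mem_unitaryGroup_iff').mp hxu
  have hxinv : x⁻¹ = xᴴ := Matrix.inv_eq_right_inv hxr
  have hM : ∀ i j : Fin n, ((i.val < q ∧ j.val < q) ∨ (¬ i.val < q ∧ ¬ j.val < q)) → M i j = 0 := by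
    intro i j h
    simp [hMdef, Matrix.sub_apply, hP2 i j h, hQ2 i j h]
  have hconj : x * A * xᴴ = A - M := by
    rw [← hxinv]
    rw [heq]
    abel
  -- trace of conjugate equals trace
  have htr1 : ((x * A * xᴴ)ᴴ * (x * A * xᴴ)).trace = (Aᴴ * A).trace := by
    have : (x * A * xᴴ)ᴴ * (x * A * xᴴ) = x * (Aᴴ * A) * xᴴ := by
      simp only [Matrix.conjTranspose_mul, Matrix.conjTranspose_conjTranspose]
      calc x * (Aᴴ * xᴴ) * (x * A * xᴴ) = x * Aᴴ * (xᴴ * x) * A * xᴴ := by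
            noncomm_ring
        _ = x * (Aᴴ * A) * xᴴ := by rw [hxl]; noncomm_ring
    rw [this, Matrix.trace_mul_cycle, ← Matrix.mul_assoc, hxl, Matrix.one_mul]
  obtain ⟨hc1, hc2⟩ := trace_zero_of_blocks n q A M hA3 hM
  have hexp : ((A - M)ᴴ * (A - M)).trace = (Aᴴ * A).trace + (Mᴴ * M).trace := by
    simp only [Matrix.conjTranspose_sub, Matrix.sub_mul, Matrix.mul_sub]
    simp only [Matrix.trace_sub]
    rw [hc1, hc2]; ring
  rw [hconj, hexp] at htr1
  have hMM : (Mᴴ * M).trace = 0 := by linear_combination htr1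
  have := eq_zero_of_trace n M hMM
  rw [hMdef] at this
  exact sub_eq_zero.mp this
end

section
/- Fix integers n and q with 1 ≤ q and 2q ≤ n, and let K be the subgroup of SU(n) consisting of matrices that are block-diagonal with respect to the partition (q, n−q) of the index set (i.e., R ∈ SU(n) with R i j = 0 whenever exactly one of the indices i, j is < q). Let ω = e^{2πi/n} and H = {ωᵏ·I : k = 0, 1, …, n−1}. Then: (i) every element of H lies in K and satisfies h X h⁻¹ = X for all X ∈ SU(n); and (ii) there exists a matrix X ∈ SU(n) such that for every R ∈ K, R X R⁻¹ = X holds if and only if R ∈ H. In particular, the minimal isotropy group of the conjugation action of K on SU(n) is the finite abelian group H. -/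
/-!
Scalar matrices `ωᵏ • 1` are central, block-diagonal, and lie in `SU(n)` because `ωᵏ` is an
`n`-th root of unity. For the witness take a unimodular multiple `X = ζ • P` of the cyclic shift
`P`. A matrix commuting with `P` is circulant, `R i j = v (i - j)`, and a circulant matrix that is
block-diagonal for a split `0 < q < n` is scalar, since every nonzero shift `d` relates an index of
one block to an index of the other. Finally `det R = 1` makes the scalar an `n`-th root of unity.
-/

open Matrix Equiv

theorem Complex.mem_unitary_of_norm_eq_one {ζ : ℂ} (h : ‖ζ‖ = 1) : ζ ∈ unitary ℂ := by
  rw [Unitary.mem_iff, mul_comm, and_self, Complex.star_def, Complex.mul_conj', h]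
  norm_num

namespace Matrix

section UnitaryGroup

variable {ι α : Type*} [Fintype ι] [DecidableEq ι]

theorem mul_mul_nonsing_inv_eq_self_iff_commute [CommRing α] {R X : Matrix ι ι α}
    (hR : IsUnit R.det) : R * X * R⁻¹ = X ↔ Commute R X := by
  refine ⟨fun h => ?_, fun h => by rw [h.eq, mul_nonsing_inv_cancel_right _ _ hR]⟩
  calc R * X = R * X * R⁻¹ * R := (nonsing_inv_mul_cancel_right _ _ hR).symm
    _ = X * R := by rw [h]

theorem commute_permMatrix_iff [Semiring α] {σ : Perm ι} {M : Matrix ι ι α} :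
    Commute (σ.permMatrix α) M ↔ ∀ i j, M (σ i) (σ j) = M i j := by
  rw [Commute, SemiconjBy, PEquiv.toMatrix_toPEquiv_mul, PEquiv.mul_toMatrix_toPEquiv,
    ← Matrix.ext_iff]
  simp only [submatrix_apply, id]
  exact ⟨fun h i j => by simpa using h i (σ j), fun h i j => by simpa using h i (σ.symm j)⟩

theorem permMatrix_mem_unitaryGroup [CommRing α] [StarRing α] (σ : Perm ι) :
    σ.permMatrix α ∈ unitaryGroup ι α := by
  rw [mem_unitaryGroup_iff', star_eq_conjTranspose, conjTranspose_permMatrix, ← permMatrix_mul,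
    mul_inv_cancel, permMatrix_one]

theorem smul_mem_specialUnitaryGroup [CommRing α] [StarRing α] {ζ : α} {U : Matrix ι ι α}
    (hζ : ζ ∈ unitary α) (hU : U ∈ unitaryGroup ι α) (hdet : ζ ^ Fintype.card ι * U.det = 1) :
    ζ • U ∈ specialUnitaryGroup ι α := by
  rw [mem_specialUnitaryGroup_iff, det_smul]
  exact ⟨Unitary.smul_mem_of_mem hζ hU, hdet⟩

theorem exists_smul_mem_specialUnitaryGroup [Nonempty ι] {U : Matrix ι ι ℂ}
    (hU : U ∈ unitaryGroup ι ℂ) : ∃ ζ : ℂ, ζ ≠ 0 ∧ ζ • U ∈ specialUnitaryGroup ι ℂ := by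
  obtain ⟨ζ, hζ⟩ := IsAlgClosed.exists_pow_nat_eq U.det⁻¹ (Fintype.card_pos (α := ι))
  have hdet : ‖U.det‖ = 1 := CStarRing.norm_of_mem_unitary (det_of_mem_unitary hU)
  have hnorm : ‖ζ‖ = 1 := by
    rwa [← pow_eq_one_iff_of_nonneg (norm_nonneg ζ) (Fintype.card_ne_zero (α := ι)), ← norm_pow,
      hζ, norm_inv, inv_eq_one]
  refine ⟨ζ, norm_ne_zero_iff.1 (by rw [hnorm]; exact one_ne_zero),
    smul_mem_specialUnitaryGroup (Complex.mem_unitary_of_norm_eq_one hnorm) hU ?_⟩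
  rw [hζ, inv_mul_cancel₀ (norm_ne_zero_iff.1 (by rw [hdet]; exact one_ne_zero))]

theorem smul_one_mem_specialUnitaryGroup [Nonempty ι] {ζ : ℂ} (hζ : ζ ^ Fintype.card ι = 1) :
    ζ • (1 : Matrix ι ι ℂ) ∈ specialUnitaryGroup ι ℂ :=
  smul_mem_specialUnitaryGroup
    (Complex.mem_unitary_of_norm_eq_one (Complex.norm_eq_one_of_pow_eq_one hζ Fintype.card_ne_zero))
    (one_mem _) (by rw [hζ, det_one, one_mul])

end UnitaryGroup

section Circulant

variable {n : ℕ} {α : Type*}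

def IsBlockDiagAt [Zero α] (q : ℕ) (M : Matrix (Fin n) (Fin n) α) : Prop :=
  ∀ i j : Fin n, ((i.val < q ∧ ¬ j.val < q) ∨ (¬ i.val < q ∧ j.val < q)) → M i j = 0

theorem isBlockDiagAt_smul_one [Semiring α] (c : α) (q : ℕ) :
    IsBlockDiagAt q (c • (1 : Matrix (Fin n) (Fin n) α)) := by
  intro i j hij
  have hne : i ≠ j := by rintro rfl; tauto
  rw [Matrix.smul_apply, one_apply_ne hne, smul_zero]

variable [NeZero n]

theorem apply_add_add_of_apply_add_one_add_one {M : Matrix (Fin n) (Fin n) α}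
    (h : ∀ i j, M (i + 1) (j + 1) = M i j) (t i j : Fin n) : M (i + t) (j + t) = M i j := by
  obtain ⟨m, rfl⟩ := Nat.exists_eq_succ_of_ne_zero (NeZero.ne n)
  induction t using Fin.induction generalizing i j with
  | zero => simp only [add_zero]
  | succ t ih => rw [← Fin.coeSucc_eq_succ, ← add_assoc, ← add_assoc, h, ih]

theorem eq_circulant_of_commute_finRotate [Semiring α] {M : Matrix (Fin n) (Fin n) α}
    (h : Commute ((finRotate n).permMatrix α) M) : M = circulant fun i => M i 0 := by
  have hshift : ∀ i j, M (i + 1) (j + 1) = M i j := by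
    simpa only [finRotate_apply] using commute_permMatrix_iff.1 h
  ext i j
  simpa using apply_add_add_of_apply_add_one_add_one hshift j (i - j) 0

theorem circulant_eq_smul_one_of_isBlockDiagAt [Semiring α] {v : Fin n → α} {q : ℕ}
    (hq : 0 < q) (hqn : q < n) (h : IsBlockDiagAt q (circulant v)) : circulant v = v 0 • 1 := by
  have hv : ∀ d ≠ 0, v d = 0 := by
    intro d hd
    by_cases hdq : d.val < q
    · -- the entry `(q, q - d)` crosses the blocks
      set Q : Fin n := ⟨q, hqn⟩
      have hdQ : d ≤ Q := Fin.le_iff_val_le_val.2 hdq.le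
      have hd0 : 0 < d.val := Fin.pos_iff_ne_zero.2 hd
      rw [← sub_sub_cancel Q d]
      refine h Q (Q - d) (Or.inr ⟨lt_irrefl q, ?_⟩)
      rw [Fin.coe_sub_iff_le.2 hdQ]
      show q - d.val < q
      omega
    · rw [← circulant_col_zero_eq v d]
      exact h d 0 (Or.inr ⟨hdq, hq⟩)
  ext i j
  rw [circulant_apply, Matrix.smul_apply, one_apply]
  split_ifs with hij
  · rw [hij, sub_self, smul_eq_mul, mul_one]
  · rw [hv _ (sub_ne_zero.2 hij), smul_zero]

end Circulant

end Matrix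

/-- **Minimal isotropy group for the conjugation action of `K` on `SU(n)` (type AIII).**
`K` is the block-diagonal subgroup of `SU(n)` (blocks of sizes `q` and `n - q`),
`ω = e^{2πi/n}` and `H = {ωᵏ • I : k = 0, …, n-1}`.  Then every element of `H` lies in `K`
and is fixed-point-free under conjugation (it commutes with everything in `SU(n)`), and
there is a matrix `X ∈ SU(n)` whose isotropy group in `K` is exactly `H`. -/
theorem stmt2 (n q : ℕ) (hq : 1 ≤ q) (hqn : 2 * q ≤ n)
    (ω : ℂ) (hω : ω = Complex.exp (2 * Real.pi * Complex.I / n))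
    (H : Set (Matrix (Fin n) (Fin n) ℂ))
    (hH : H = {M | ∃ k : ℕ, k < n ∧ M = ω ^ k • (1 : Matrix (Fin n) (Fin n) ℂ)}) :
    -- (i) every element of `H` lies in `K` and acts trivially by conjugation on `SU(n)`
    (∀ h ∈ H,
      (h ∈ Matrix.specialUnitaryGroup (Fin n) ℂ ∧
        ∀ i j : Fin n, ((i.val < q ∧ ¬ j.val < q) ∨ (¬ i.val < q ∧ j.val < q)) → h i j = 0) ∧
      ∀ X ∈ Matrix.specialUnitaryGroup (Fin n) ℂ, h * X * h⁻¹ = X) ∧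
    -- (ii) some `X ∈ SU(n)` has isotropy group in `K` exactly equal to `H`
    (∃ X ∈ Matrix.specialUnitaryGroup (Fin n) ℂ,
      ∀ R : Matrix (Fin n) (Fin n) ℂ,
        (R ∈ Matrix.specialUnitaryGroup (Fin n) ℂ ∧
          ∀ i j : Fin n, ((i.val < q ∧ ¬ j.val < q) ∨ (¬ i.val < q ∧ j.val < q)) → R i j = 0) →
        (R * X * R⁻¹ = X ↔ R ∈ H)) := by
  have : NeZero n := ⟨by omega⟩
  have hprim : IsPrimitiveRoot ω n := hω ▸ Complex.isPrimitiveRoot_exp n (NeZero.ne n)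
  have isUnit_det {R} (hR : R ∈ specialUnitaryGroup (Fin n) ℂ) : IsUnit R.det :=
    (mem_specialUnitaryGroup_iff.1 hR).2 ▸ isUnit_one
  have central : ∀ h ∈ H, (h ∈ specialUnitaryGroup (Fin n) ℂ ∧ IsBlockDiagAt q h) ∧
      ∀ X ∈ specialUnitaryGroup (Fin n) ℂ, h * X * h⁻¹ = X := by
    rw [hH]
    rintro _ ⟨k, -, rfl⟩
    have hSU : ω ^ k • (1 : Matrix (Fin n) (Fin n) ℂ) ∈ specialUnitaryGroup (Fin n) ℂ :=
      smul_one_mem_specialUnitaryGroup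
        (by rw [Fintype.card_fin, pow_right_comm, hprim.pow_eq_one, one_pow])
    refine ⟨⟨hSU, isBlockDiagAt_smul_one _ q⟩, fun X _ => ?_⟩
    rw [mul_mul_nonsing_inv_eq_self_iff_commute (isUnit_det hSU)]
    exact (Commute.one_left X).smul_left _
  obtain ⟨ζ, hζ, hX⟩ := exists_smul_mem_specialUnitaryGroup
    (permMatrix_mem_unitaryGroup (α := ℂ) (finRotate n))
  refine ⟨central, _, hX, fun R ⟨hR, hRblk⟩ => ⟨fun hfix => ?_, fun hRH => (central R hRH).2 _ hX⟩⟩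
  rw [mul_mul_nonsing_inv_eq_self_iff_commute (isUnit_det hR), Commute.smul_right_iff₀ hζ] at hfix
  have hRcirc := eq_circulant_of_commute_finRotate hfix.symm
  have hRscalar : R = R 0 0 • 1 := hRcirc.trans
    (circulant_eq_smul_one_of_isBlockDiagAt hq (by omega) (hRcirc ▸ hRblk))
  have hpow : R 0 0 ^ n = 1 := by
    have hdet := (mem_specialUnitaryGroup_iff.1 hR).2
    rwa [hRscalar, det_smul, det_one, Fintype.card_fin, mul_one] at hdet
  obtain ⟨k, hk, hωk⟩ := hprim.eq_pow_of_pow_eq_one hpow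
  exact hH ▸ ⟨k, hk, hωk ▸ hRscalar⟩
end

section
/- Let X and Y be elements of SU(2), the group of 2×2 complex unitary matrices of determinant 1. Then there exists a diagonal matrix k ∈ SU(2) with k X k⁻¹ = Y if and only if the (1,1) entries of X and Y are equal. -/
/-!
Every element of `SU(2)` is `!![a, b; -b̄, ā]` with `|a|² + |b|² = 1`, and conjugating it by
`diag(u, ū)`, `|u| = 1`, gives `!![a, u²b; -(u²b)‾, ā]`. So conjugation by the diagonal torus
fixes `a` and rotates `b` by an arbitrary phase `u²`; when the `(1,1)` entries agree, the
`(1,2)` entries have the same modulus and hence differ by such a phase.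
-/

open Matrix ComplexConjugate

section DiagonalConjugation

variable {n K : Type*} [Fintype n] [DecidableEq n] [Field K]

theorem inv_diagonal_of_ne_zero {d : n → K} (hd : ∀ i, d i ≠ 0) :
    (diagonal d)⁻¹ = diagonal d⁻¹ :=
  inv_eq_right_inv <| by
    rw [diagonal_mul_diagonal, ← diagonal_one]
    exact congrArg diagonal (funext fun i => mul_inv_cancel₀ (hd i))

theorem diagonal_mul_mul_inv_diagonal_apply {d : n → K} (hd : ∀ i, d i ≠ 0)
    (A : Matrix n n K) (i j : n) :
    (diagonal d * A * (diagonal d)⁻¹) i j = d i * A i j * (d j)⁻¹ := by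
  rw [inv_diagonal_of_ne_zero hd, mul_diagonal, diagonal_mul, Pi.inv_apply]

theorem diagonal_mul_mul_inv_diagonal_apply_self {d : n → K} (hd : ∀ i, d i ≠ 0)
    (A : Matrix n n K) (i : n) : (diagonal d * A * (diagonal d)⁻¹) i i = A i i := by
  rw [diagonal_mul_mul_inv_diagonal_apply hd, mul_comm (d i), mul_inv_cancel_right₀ (hd i)]

end DiagonalConjugation

theorem eq_diagonal_of_fin_two {R : Type*} [Zero R] {k : Matrix (Fin 2) (Fin 2) R}
    (h01 : k 0 1 = 0) (h10 : k 1 0 = 0) : k = diagonal ![k 0 0, k 1 1] := by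
  ext i j
  fin_cases i <;> fin_cases j <;> simp [h01, h10]

def su2Mat (a b : ℂ) : Matrix (Fin 2) (Fin 2) ℂ :=
  !![a, b; -conj b, conj a]

section SpecialUnitaryFinTwo

variable {A : Matrix (Fin 2) (Fin 2) ℂ} (hA : A ∈ specialUnitaryGroup (Fin 2) ℂ)
include hA

theorem star_eq_adjugate_of_mem_specialUnitaryGroup : star A = adjugate A := by
  obtain ⟨hU, hdet⟩ := mem_specialUnitaryGroup_iff.mp hA
  rw [← inv_eq_right_inv (mem_unitaryGroup_iff.mp hU), inv_def, hdet, Ring.inverse_one,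
    one_smul]

theorem eq_su2Mat_of_mem_specialUnitaryGroup : A = su2Mat (A 0 0) (A 0 1) := by
  have h := star_eq_adjugate_of_mem_specialUnitaryGroup hA
  rw [adjugate_fin_two] at h
  have h00 := congrFun (congrFun h 0) 0
  have h01 := congrFun (congrFun h 0) 1
  simp only [star_apply, RCLike.star_def, of_apply, cons_val', cons_val_zero, cons_val_one,
    empty_val', cons_val_fin_one] at h00 h01
  have h10 : A 1 0 = -conj (A 0 1) := by simpa using congrArg conj h01
  ext i j
  fin_cases i <;> fin_cases j <;> simp [su2Mat, h00, h10]

theorem norm_sq_add_norm_sq_of_mem_specialUnitaryGroup :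
    ‖A 0 0‖ ^ 2 + ‖A 0 1‖ ^ 2 = 1 := by
  have hdet := (mem_specialUnitaryGroup_iff.mp hA).2
  rw [eq_su2Mat_of_mem_specialUnitaryGroup hA, det_fin_two] at hdet
  simp only [su2Mat, of_apply, cons_val', cons_val_zero, cons_val_one,
    empty_val', cons_val_fin_one] at hdet
  have h : (‖A 0 0‖ ^ 2 + ‖A 0 1‖ ^ 2 : ℂ) = 1 := by
    linear_combination hdet - Complex.mul_conj' (A 0 0) - Complex.mul_conj' (A 0 1)
  exact_mod_cast h

end SpecialUnitaryFinTwo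

section CircleDiagonal

variable {u : ℂ} (hu : ‖u‖ = 1)
include hu

theorem diagonal_conj_mem_specialUnitaryGroup :
    diagonal ![u, conj u] ∈ specialUnitaryGroup (Fin 2) ℂ := by
  have hu' : conj u * u = 1 := by rw [Complex.conj_mul', hu]; norm_num
  rw [mem_specialUnitaryGroup_iff, mem_unitaryGroup_iff, star_eq_conjTranspose,
    diagonal_conjTranspose, diagonal_mul_diagonal, det_fin_two]
  constructor
  · ext i j
    fin_cases i <;> fin_cases j <;> simp [hu', mul_comm u]
  · simpa [mul_comm u] using hu'

theorem diagonal_conj_mul_su2Mat_mul_inv (a b : ℂ) :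
    diagonal ![u, conj u] * su2Mat a b * (diagonal ![u, conj u])⁻¹ = su2Mat a (u ^ 2 * b) := by
  have hu0 : u ≠ 0 := by rintro rfl; simp at hu
  have hd : ∀ i, ![u, conj u] i ≠ 0 := Fin.forall_fin_two.mpr ⟨hu0, (map_ne_zero _).mpr hu0⟩
  ext i j
  rw [diagonal_mul_mul_inv_diagonal_apply hd]
  fin_cases i <;> fin_cases j <;> simp [su2Mat, ← Complex.inv_eq_conj hu] <;> field_simp

end CircleDiagonal

theorem Complex.exists_norm_eq_one_sq_mul_eq {a b : ℂ} (h : ‖a‖ = ‖b‖) :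
    ∃ u : ℂ, ‖u‖ = 1 ∧ u ^ 2 * a = b := by
  rcases eq_or_ne a 0 with rfl | ha
  · exact ⟨1, norm_one, by simpa [eq_comm] using h⟩
  obtain ⟨u, hu⟩ := IsAlgClosed.exists_pow_nat_eq (b / a) two_pos
  refine ⟨u, ?_, by rw [hu, div_mul_cancel₀ _ ha]⟩
  have : ‖u‖ ^ 2 = 1 := by
    rw [← norm_pow, hu, norm_div, h, div_self (h ▸ norm_ne_zero_iff.mpr ha)]
  exact (pow_eq_one_iff_of_nonneg (norm_nonneg u) two_ne_zero).mp this

/-- **Conjugation orbits of the diagonal subgroup of `SU(2)` are level sets of the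
`(1,1)` entry.**  For `X, Y ∈ SU(2)`, there is a diagonal `k ∈ SU(2)` with
`k * X * k⁻¹ = Y` if and only if `X` and `Y` have the same `(1,1)` entry. -/
theorem stmt5 (X Y : Matrix (Fin 2) (Fin 2) ℂ)
    (hX : X ∈ Matrix.specialUnitaryGroup (Fin 2) ℂ)
    (hY : Y ∈ Matrix.specialUnitaryGroup (Fin 2) ℂ) :
    (∃ k : Matrix (Fin 2) (Fin 2) ℂ,
      k ∈ Matrix.specialUnitaryGroup (Fin 2) ℂ ∧
      k 0 1 = 0 ∧ k 1 0 = 0 ∧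
      k * X * k⁻¹ = Y) ↔ X 0 0 = Y 0 0 := by
  constructor
  · rintro ⟨k, hk, h01, h10, rfl⟩
    have hdet : k 0 0 * k 1 1 = 1 := by
      simpa [det_fin_two, h01, h10] using (mem_specialUnitaryGroup_iff.mp hk).2
    have hd : ∀ i, ![k 0 0, k 1 1] i ≠ 0 :=
      Fin.forall_fin_two.mpr ⟨left_ne_zero_of_mul_eq_one hdet, right_ne_zero_of_mul_eq_one hdet⟩
    rw [eq_diagonal_of_fin_two h01 h10, diagonal_mul_mul_inv_diagonal_apply_self hd]
  · intro h
    have hnorm : ‖X 0 1‖ = ‖Y 0 1‖ := by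
      have := norm_sq_add_norm_sq_of_mem_specialUnitaryGroup hX
      rw [h, ← norm_sq_add_norm_sq_of_mem_specialUnitaryGroup hY, add_right_inj] at this
      exact (pow_left_inj₀ (norm_nonneg _) (norm_nonneg _) two_ne_zero).mp this
    obtain ⟨u, hu, huXY⟩ := Complex.exists_norm_eq_one_sq_mul_eq hnorm
    refine ⟨diagonal ![u, conj u], diagonal_conj_mem_specialUnitaryGroup hu, rfl, rfl, ?_⟩
    rw [eq_su2Mat_of_mem_specialUnitaryGroup hX, eq_su2Mat_of_mem_specialUnitaryGroup hY,
      diagonal_conj_mul_su2Mat_mul_inv hu, h, huXY]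
end

section
/- Let K be the subgroup of diagonal matrices in SU(2), acting on SU(2) by conjugation. The map sending X ∈ SU(2) to its (1,1) entry is constant on the orbits of this action, and the induced map from the orbit space SU(2)/K (the quotient of SU(2) by the orbit equivalence relation of the conjugation action of K) to the closed unit disc {z ∈ ℂ : |z| ≤ 1} is a bijection. -/
/-!
Every `X ∈ SU(2)` is `!![z, w; -conj w, conj z]` with `‖z‖² + ‖w‖² = 1`. Conjugation by an
invertible diagonal matrix fixes diagonal entries, and conjugation by `diag(a, conj a)` with
`‖a‖ = 1` turns `w` into `a² w`. Two matrices with the same `z` have `w`'s of the same modulus,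
hence differ by such a factor `a²`; and every `‖z‖ ≤ 1` occurs, with `w = √(1 - ‖z‖²)`.
-/

open Matrix

/-- The orbit relation of the conjugation action of the diagonal subgroup `K` of
`SU(2)` on `SU(2)`: `X ~ Y` iff `Y = k * X * k⁻¹` for some diagonal `k ∈ SU(2)`.
Elements of `SU(2)` are represented as the subtype of matrices in
`Matrix.specialUnitaryGroup (Fin 2) ℂ`. -/
def su2OrbitRel (X Y : Matrix.specialUnitaryGroup (Fin 2) ℂ) : Prop :=
  ∃ k : Matrix (Fin 2) (Fin 2) ℂ,
    k ∈ Matrix.specialUnitaryGroup (Fin 2) ℂ ∧ k 0 1 = 0 ∧ k 1 0 = 0 ∧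
    k * (X : Matrix (Fin 2) (Fin 2) ℂ) * k⁻¹ = (Y : Matrix (Fin 2) (Fin 2) ℂ)

open Complex ComplexConjugate

namespace Complex

theorem exists_norm_eq_one_sq_mul_eq_s7 {w v : ℂ} (h : ‖w‖ = ‖v‖) :
    ∃ a : ℂ, ‖a‖ = 1 ∧ a ^ 2 * w = v := by
  rcases eq_or_ne w 0 with rfl | hw
  · exact ⟨1, norm_one, by simpa [eq_comm] using h⟩
  obtain ⟨a, ha⟩ := IsAlgClosed.exists_pow_nat_eq (v / w) two_pos
  refine ⟨a, ?_, by rw [ha, div_mul_cancel₀ v hw]⟩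
  have hsq : ‖a‖ ^ 2 = 1 := by
    rw [← norm_pow, ha, norm_div, h, div_self (h ▸ norm_ne_zero_iff.mpr hw)]
  exact (pow_eq_one_iff_of_nonneg (norm_nonneg a) two_ne_zero).mp hsq

end Complex

namespace Matrix

theorem IsDiag.conj_apply_self {n R : Type*} [Fintype n] [DecidableEq n] [CommRing R]
    {k : Matrix n n R} (hk : k.IsDiag) (hdet : IsUnit k.det) (X : Matrix n n R) (i : n) :
    (k * X * k⁻¹) i i = X i i := by
  have hki : IsUnit (k i i) := by
    rw [← hk.diagonal_diag, det_diagonal] at hdet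
    exact isUnit_of_dvd_unit (Finset.dvd_prod_of_mem k.diag (Finset.mem_univ i)) hdet
  set Y := k * X * k⁻¹
  have hY : Y * k = k * X := nonsing_inv_mul_cancel_right k (k * X) hdet
  rw [← hk.diagonal_diag] at hY
  have hYii := congrFun (congrFun hY i) i
  rw [mul_diagonal, diagonal_mul, mul_comm (k.diag i)] at hYii
  exact hki.mul_left_inj.mp hYii

theorem isDiag_fin_two_iff {R : Type*} [Zero R] {k : Matrix (Fin 2) (Fin 2) R} :
    k.IsDiag ↔ k 0 1 = 0 ∧ k 1 0 = 0 :=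
  ⟨fun hk => ⟨hk (by decide), hk (by decide)⟩, fun ⟨h01, h10⟩ i j hij => by
    fin_cases i <;> fin_cases j <;> simp_all⟩

def cayleyKlein (a b : ℂ) : Matrix (Fin 2) (Fin 2) ℂ :=
  !![a, b; -conj b, conj a]

theorem cayleyKlein_mem_specialUnitaryGroup_iff {a b : ℂ} :
    cayleyKlein a b ∈ specialUnitaryGroup (Fin 2) ℂ ↔ ‖a‖ ^ 2 + ‖b‖ ^ 2 = 1 := by
  have hsum : a * conj a + b * conj b = ((‖a‖ ^ 2 + ‖b‖ ^ 2 : ℝ) : ℂ) := by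
    push_cast; rw [mul_conj', mul_conj']
  have hdet : (cayleyKlein a b).det = a * conj a + b * conj b := by
    rw [cayleyKlein, det_fin_two_of]; ring
  rw [mem_specialUnitaryGroup_iff, hdet, hsum, ← ofReal_one, ofReal_inj]
  refine ⟨And.right, fun h => ⟨?_, h⟩⟩
  have hsum1 : a * conj a + b * conj b = 1 := by rw [hsum, h, ofReal_one]
  rw [mem_unitaryGroup_iff]
  ext i j
  fin_cases i <;> fin_cases j <;>
    simp [cayleyKlein, mul_apply, Fin.sum_univ_two, star_apply] <;>
    first | ring1 | linear_combination hsum1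

theorem eq_cayleyKlein_of_mem_specialUnitaryGroup {A : Matrix (Fin 2) (Fin 2) ℂ}
    (hA : A ∈ specialUnitaryGroup (Fin 2) ℂ) : A = cayleyKlein (A 0 0) (A 0 1) := by
  obtain ⟨hu, hdet⟩ := mem_specialUnitaryGroup_iff.mp hA
  -- for `det A = 1` the inverse is the adjugate, for a unitary `A` it is `star A`
  have hstar : star A = A.adjugate := by
    rw [← inv_eq_right_inv (mem_unitaryGroup_iff.mp hu), inv_def, hdet]; simp
  have h11 : A 1 1 = conj (A 0 0) := by
    simpa [adjugate_fin_two] using (congrFun (congrFun hstar 0) 0).symm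
  have h10 : A 1 0 = -conj (A 0 1) := by
    simpa [adjugate_fin_two] using congrArg conj (congrFun (congrFun hstar 0) 1)
  ext i j
  fin_cases i <;> fin_cases j <;> simp [cayleyKlein, h11, h10]

theorem cayleyKlein_diagonal_conj {a : ℂ} (ha : ‖a‖ = 1) (z w : ℂ) :
    cayleyKlein a 0 * cayleyKlein z w * (cayleyKlein a 0)⁻¹ = cayleyKlein z (a ^ 2 * w) := by
  have haa : a * conj a = 1 := by rw [mul_conj', ha]; norm_num
  have hinv : (cayleyKlein a 0)⁻¹ = cayleyKlein (conj a) 0 := by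
    refine inv_eq_left_inv ?_
    ext i j
    fin_cases i <;> fin_cases j <;> simp [cayleyKlein, mul_comm, haa]
  rw [hinv]
  ext i j
  fin_cases i <;> fin_cases j <;> simp [cayleyKlein, mul_apply, Fin.sum_univ_two]
  · linear_combination z * haa
  · ring
  · ring
  · linear_combination conj z * haa

theorem norm_apply_zero_zero_le_one_of_mem_specialUnitaryGroup {A : Matrix (Fin 2) (Fin 2) ℂ}
    (hA : A ∈ specialUnitaryGroup (Fin 2) ℂ) : ‖A 0 0‖ ≤ 1 := by
  rw [eq_cayleyKlein_of_mem_specialUnitaryGroup hA, cayleyKlein_mem_specialUnitaryGroup_iff] at hA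
  nlinarith [norm_nonneg (A 0 0), sq_nonneg ‖A 0 1‖]

theorem exists_mem_specialUnitaryGroup_apply_zero_zero_eq {z : ℂ} (hz : ‖z‖ ≤ 1) :
    ∃ A ∈ specialUnitaryGroup (Fin 2) ℂ, A 0 0 = z := by
  refine ⟨cayleyKlein z (Real.sqrt (1 - ‖z‖ ^ 2)), ?_, rfl⟩
  rw [cayleyKlein_mem_specialUnitaryGroup_iff, norm_real, Real.norm_eq_abs, sq_abs,
    Real.sq_sqrt (by nlinarith [norm_nonneg z])]
  ring

end Matrix

theorem su2OrbitRel.apply_zero_zero_eq {X Y : specialUnitaryGroup (Fin 2) ℂ}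
    (h : su2OrbitRel X Y) : X.1 0 0 = Y.1 0 0 := by
  obtain ⟨k, hk, hk01, hk10, hkXY⟩ := h
  have hdet : IsUnit k.det := by rw [(mem_specialUnitaryGroup_iff.mp hk).2]; exact isUnit_one
  rw [← hkXY, IsDiag.conj_apply_self (isDiag_fin_two_iff.mpr ⟨hk01, hk10⟩) hdet]

theorem su2OrbitRel_of_apply_zero_zero_eq {X Y : specialUnitaryGroup (Fin 2) ℂ}
    (h : X.1 0 0 = Y.1 0 0) : su2OrbitRel X Y := by
  have hX := eq_cayleyKlein_of_mem_specialUnitaryGroup X.2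
  have hY := eq_cayleyKlein_of_mem_specialUnitaryGroup Y.2
  have hnorm : ‖X.1 0 1‖ = ‖Y.1 0 1‖ := by
    have hXn := cayleyKlein_mem_specialUnitaryGroup_iff.mp (hX ▸ X.2)
    have hYn := cayleyKlein_mem_specialUnitaryGroup_iff.mp (hY ▸ Y.2)
    rw [h] at hXn
    exact (sq_eq_sq₀ (norm_nonneg _) (norm_nonneg _)).mp (by linarith)
  obtain ⟨a, ha, haw⟩ := Complex.exists_norm_eq_one_sq_mul_eq_s7 hnorm
  refine ⟨cayleyKlein a 0, cayleyKlein_mem_specialUnitaryGroup_iff.mpr (by simp [ha]), rfl,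
    by simp [cayleyKlein], ?_⟩
  rw [hX, hY, cayleyKlein_diagonal_conj ha, h, haw]

/-- **The orbit space `SU(2)/K` is the closed unit disc.**
The `(1,1)` entry is constant on the conjugation orbits of the diagonal subgroup `K`,
and the induced map from the orbit space `SU(2)/K` to the closed unit disc
`{z : ℂ | |z| ≤ 1}` is a bijection. -/
theorem stmt7 :
    (∀ X Y : Matrix.specialUnitaryGroup (Fin 2) ℂ, su2OrbitRel X Y →
      (X : Matrix (Fin 2) (Fin 2) ℂ) 0 0 = (Y : Matrix (Fin 2) (Fin 2) ℂ) 0 0) ∧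
    (∃ f : Quot su2OrbitRel → {z : ℂ // ‖z‖ ≤ 1},
      (∀ X : Matrix.specialUnitaryGroup (Fin 2) ℂ,
        (f (Quot.mk su2OrbitRel X) : ℂ) = (X : Matrix (Fin 2) (Fin 2) ℂ) 0 0) ∧
      Function.Bijective f) := by
  refine ⟨fun _ _ => su2OrbitRel.apply_zero_zero_eq, ?_⟩
  refine ⟨Quot.lift (fun X => ⟨X.1 0 0, norm_apply_zero_zero_le_one_of_mem_specialUnitaryGroup X.2⟩)
    (fun _ _ h => Subtype.ext h.apply_zero_zero_eq), fun _ => rfl, ?_, ?_⟩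
  · rintro ⟨X⟩ ⟨Y⟩ h
    exact Quot.sound (su2OrbitRel_of_apply_zero_zero_eq (congrArg Subtype.val h))
  · rintro ⟨z, hz⟩
    obtain ⟨A, hA, hAz⟩ := exists_mem_specialUnitaryGroup_apply_zero_zero_eq hz
    exact ⟨Quot.mk _ ⟨A, hA⟩, Subtype.ext hAz⟩
end
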